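/- arXiv:0909.2770 — 2 statements merged into one kernel-verified Lean document; each statement's English description precedes it below -/
import Mathlib

section
/- Let n, m be positive integers with n > 2m. Then B(KG(n, m)) ⊆ B(KG(n+2, m+1)); that is, every positive integer k such that KG(n,m) admits a colorful k-coloring also satisfies that KG(n+2, m+1) admits a colorful k-coloring. -/
/-- A proper coloring of `G` with colors in `Fin k`. -/
def IsProperColoring {V : Type*} (G : SimpleGraph V) {k : ℕ} (f : V → Fin k) : Prop :=
  ∀ u v : V, G.Adj u v → f u ≠ f v

/-- A vertex `v` is b-dominating w.r.t. the coloring `f` if every color appears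
on the closed neighborhood of `v`. -/
def IsBDominating {V : Type*} (G : SimpleGraph V) {k : ℕ} (f : V → Fin k) (v : V) : Prop :=
  ∀ i : Fin k, f v = i ∨ ∃ u : V, G.Adj v u ∧ f u = i

/-- A colorful (b-) coloring: a proper coloring in which every color class contains
a b-dominating vertex. -/
def IsColorfulColoring {V : Type*} (G : SimpleGraph V) {k : ℕ} (f : V → Fin k) : Prop :=
  IsProperColoring G f ∧ ∀ i : Fin k, ∃ v : V, f v = i ∧ IsBDominating G f v

/-- `BSet G` is the set of positive integers `k` such that `G` has a colorful `k`-coloring. -/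
def BSet {V : Type*} (G : SimpleGraph V) : Set ℕ :=
  {k | 0 < k ∧ ∃ f : V → Fin k, IsColorfulColoring G f}

/-- The b-chromatic number: the maximum of `BSet G`. -/
noncomputable def bChromaticNumber {V : Type*} (G : SimpleGraph V) : ℕ :=
  sSup (BSet G)

/-- A semi-locally-surjective graph homomorphism from `G` to `H`. -/
def IsSLSHom {V W : Type*} (G : SimpleGraph V) (H : SimpleGraph W) (f : V → W) : Prop :=
  (∀ a b : V, G.Adj a b → H.Adj (f a) (f b)) ∧
  Function.Surjective f ∧
  ∀ u : W, ∃ a : V, f a = u ∧ ∀ v : W, H.Adj u v → ∃ b : V, f b = v ∧ G.Adj a b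

/-- Vertices of the Kneser graph `KG n m`: `m`-element subsets of `{1, ..., n}`. -/
def KneserVert (n m : ℕ) : Type :=
  {A : Finset ℕ // A ⊆ Finset.Icc 1 n ∧ A.card = m}

/-- The Kneser graph `KG n m`. -/
def KG (n m : ℕ) : SimpleGraph (KneserVert n m) where
  Adj X Y := X ≠ Y ∧ Disjoint X.1 Y.1
  symm := by
    constructor
    intro X Y h
    exact ⟨h.1.symm, h.2.symm⟩
  loopless := by
    constructor
    intro X h
    exact h.1 rfl


/-! A semi-locally-surjective homomorphism `φ : G → H` pulls a colorful coloring `c` of `H` back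
to the colorful coloring `c ∘ φ` of `G`: a b-dominating vertex `v` of `H` is the image of a vertex
`a` whose neighbours map onto those of `v`. For Kneser graphs, such a map
`KG (n + 2) (m + 1) → KG n m` forgets the elements `n + 1, n + 2` of a set and then corrects its
size; `X ∪ {n + 1}` lies over `X`, and its neighbours `Y ∪ {n + 2}` over the neighbours `Y` of
`X`. -/

open Finset

theorem BSet_subset_of_isSLSHom {V W : Type*} {G : SimpleGraph V} {H : SimpleGraph W}
    {φ : V → W} (hφ : IsSLSHom G H φ) : BSet H ⊆ BSet G := by
  rintro k ⟨hk, c, hc_proper, hc_colorful⟩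
  refine ⟨hk, c ∘ φ, fun a b hab => hc_proper _ _ (hφ.1 a b hab), fun i => ?_⟩
  obtain ⟨v, hvi, hv_dom⟩ := hc_colorful i
  obtain ⟨a, rfl, ha_lift⟩ := hφ.2.2 v
  refine ⟨a, hvi, fun j => (hv_dom j).imp id ?_⟩
  rintro ⟨w, hvw, rfl⟩
  obtain ⟨b, rfl, hab⟩ := ha_lift w hvw
  exact ⟨b, hab, rfl⟩

theorem KG_adj_iff {n m : ℕ} (hm : 0 < m) {X Y : KneserVert n m} :
    (KG n m).Adj X Y ↔ Disjoint X.1 Y.1 := by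
  refine ⟨And.right, fun h => ⟨?_, h⟩⟩
  rintro rfl
  rw [disjoint_self_iff_empty] at h
  have := X.2.2
  simp [h] at this
  omega

/-- Removing `n + 1` and `n + 2` from an `(m+1)`-subset of `[n+2]` leaves `m + 1`, `m` or
`m - 1` elements of `[n]`; `kneserDown` restores the size `m` by deleting the largest element,
doing nothing, or adding the largest element of `[n]` missing from the set, respectively. -/
def kneserDown (n : ℕ) (A : Finset ℕ) : Finset ℕ :=
  let C := (A.erase (n + 1)).erase (n + 2)
  if n + 1 ∈ A ∧ n + 2 ∈ A then insert ((Icc 1 n \ A).sup id) C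
  else if n + 1 ∈ A ∨ n + 2 ∈ A then C
  else C.erase (C.sup id)

section kneserDown

variable {n m : ℕ} {A B : Finset ℕ}

theorem sup_id_mem {α : Type*} [LinearOrder α] [OrderBot α] {s : Finset α} (hs : s.Nonempty) : s.sup id ∈ s := by
  simpa using sup_mem_of_nonempty (f := id) hs

theorem erase_erase_subset_Icc (hA : A ⊆ Icc 1 (n + 2)) :
    (A.erase (n + 1)).erase (n + 2) ⊆ Icc 1 n := by
  intro a ha
  simp only [mem_erase] at ha
  have := hA ha.2.2
  simp only [mem_Icc] at this ⊢
  omega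

theorem kneserDown_of_both (h : n + 1 ∈ A ∧ n + 2 ∈ A) :
    kneserDown n A = insert ((Icc 1 n \ A).sup id) ((A.erase (n + 1)).erase (n + 2)) :=
  if_pos h

theorem kneserDown_of_neither (h₁ : n + 1 ∉ A) (h₂ : n + 2 ∉ A) :
    kneserDown n A = A.erase (A.sup id) := by
  simp [kneserDown, h₁, h₂, erase_eq_of_notMem]

theorem kneserDown_subset_erase_erase (h : ¬(n + 1 ∈ A ∧ n + 2 ∈ A)) :
    kneserDown n A ⊆ (A.erase (n + 1)).erase (n + 2) := by
  unfold kneserDown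
  rw [if_neg h]
  split_ifs
  · exact Subset.rfl
  · exact erase_subset _ _

theorem kneserDown_subset_self (h : ¬(n + 1 ∈ A ∧ n + 2 ∈ A)) : kneserDown n A ⊆ A :=
  (kneserDown_subset_erase_erase h).trans ((erase_subset _ _).trans (erase_subset _ _))

theorem Icc_sdiff_nonempty (hmn : m ≤ n) (hA : A.card = m + 1) (h : n + 1 ∈ A ∧ n + 2 ∈ A) :
    (Icc 1 n \ A).Nonempty := by
  rw [sdiff_nonempty]
  intro hsub
  have : ({n + 1, n + 2} ∪ Icc 1 n : Finset ℕ) ⊆ A :=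
    union_subset (insert_subset h.1 (singleton_subset_iff.2 h.2)) hsub
  have := card_le_card this
  rw [card_union_of_disjoint (by simp), card_pair (by omega), Nat.card_Icc] at this
  omega

theorem kneserDown_subset (hmn : m ≤ n) (hA : A ⊆ Icc 1 (n + 2)) (hcard : A.card = m + 1) :
    kneserDown n A ⊆ Icc 1 n := by
  by_cases h : n + 1 ∈ A ∧ n + 2 ∈ A
  · rw [kneserDown_of_both h]
    exact insert_subset (mem_sdiff.1 (sup_id_mem (Icc_sdiff_nonempty hmn hcard h))).1
      (erase_erase_subset_Icc hA)
  · exact (kneserDown_subset_erase_erase h).trans (erase_erase_subset_Icc hA)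

theorem kneserDown_card (hmn : m ≤ n) (hcard : A.card = m + 1) :
    (kneserDown n A).card = m := by
  unfold kneserDown
  split_ifs with h₂ h₁
  · have hx := mem_sdiff.1 (sup_id_mem (Icc_sdiff_nonempty hmn hcard h₂))
    have hA₁ := card_erase_add_one h₂.1
    have hA₂ := card_erase_add_one (mem_erase.2 ⟨(by omega : n + 2 ≠ n + 1), h₂.2⟩)
    rw [card_insert_of_notMem fun hC => hx.2 ((erase_subset _ _).trans (erase_subset _ _) hC)]
    omega
  · rcases h₁ with h₁ | h₁
    · have : n + 2 ∉ A := fun h => h₂ ⟨h₁, h⟩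
      simp [card_erase_of_mem, h₁, this, erase_eq_of_notMem, hcard]
    · have : n + 1 ∉ A := fun h => h₂ ⟨h, h₁⟩
      simp [card_erase_of_mem, h₁, this, erase_eq_of_notMem, hcard]
  · push Not at h₁
    have hA : A.Nonempty := card_pos.1 (by omega)
    simp [card_erase_of_mem, h₁, erase_eq_of_notMem, hcard, sup_id_mem hA]

/-- The added element `x` is at least `max B`, because `max B ∈ [n] \ A`; so either `x = max B`,
which `kneserDown` deletes from `B`, or `x ∉ B`. -/
theorem disjoint_kneserDown_of_both (hB : B ⊆ Icc 1 (n + 2)) (h : n + 1 ∈ A ∧ n + 2 ∈ A)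
    (hAB : Disjoint A B) : Disjoint (kneserDown n A) (kneserDown n B) := by
  have hB₁ : n + 1 ∉ B := disjoint_left.1 hAB h.1
  have hB₂ : n + 2 ∉ B := disjoint_left.1 hAB h.2
  rw [kneserDown_of_both h, kneserDown_of_neither hB₁ hB₂, disjoint_insert_left]
  refine ⟨fun hx => ?_,
    hAB.mono ((erase_subset _ _).trans (erase_subset _ _)) (erase_subset _ _)⟩
  obtain ⟨hxM, hxB⟩ := mem_erase.1 hx
  have hM : B.sup id ∈ B := sup_id_mem ⟨_, hxB⟩
  have hM_mem : B.sup id ∈ Icc 1 n := by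
    have hM₁ : B.sup id ≠ n + 1 := fun h => hB₁ (h ▸ hM)
    have hM₂ : B.sup id ≠ n + 2 := fun h => hB₂ (h ▸ hM)
    have := hB hM
    simp only [mem_Icc] at this ⊢
    omega
  have hM_le : B.sup id ≤ (Icc 1 n \ A).sup id :=
    le_sup (f := id) (mem_sdiff.2 ⟨hM_mem, disjoint_right.1 hAB hM⟩)
  exact hxM (le_antisymm (le_sup (f := id) hxB) hM_le)

theorem disjoint_kneserDown (hA : A ⊆ Icc 1 (n + 2)) (hB : B ⊆ Icc 1 (n + 2))
    (hAB : Disjoint A B) : Disjoint (kneserDown n A) (kneserDown n B) := by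
  by_cases hA₂ : n + 1 ∈ A ∧ n + 2 ∈ A
  · exact disjoint_kneserDown_of_both hB hA₂ hAB
  by_cases hB₂ : n + 1 ∈ B ∧ n + 2 ∈ B
  · exact (disjoint_kneserDown_of_both hA hB₂ hAB.symm).symm
  exact hAB.mono (kneserDown_subset_self hA₂) (kneserDown_subset_self hB₂)

theorem kneserDown_insert (hA : A ⊆ Icc 1 n) {e : ℕ} (he : e = n + 1 ∨ e = n + 2) :
    kneserDown n (insert e A) = A := by
  have h₁ : n + 1 ∉ A := fun h => by simpa using hA h
  have h₂ : n + 2 ∉ A := fun h => by simpa using hA h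
  rcases he with rfl | rfl <;> simp [kneserDown, h₁, h₂, erase_eq_of_notMem]

end kneserDown

section KneserGraph

variable {n m : ℕ}

theorem KneserVert.notMem_of_lt (X : KneserVert n m) {e : ℕ} (he : n < e) : e ∉ X.1 :=
  fun h => by have := mem_Icc.1 (X.2.1 h); omega

def kneserProj (hmn : m ≤ n) (A : KneserVert (n + 2) (m + 1)) : KneserVert n m :=
  ⟨kneserDown n A.1, kneserDown_subset hmn A.2.1 A.2.2, kneserDown_card hmn A.2.2⟩

def kneserLift (e : ℕ) (he : e = n + 1 ∨ e = n + 2) (X : KneserVert n m) :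
    KneserVert (n + 2) (m + 1) :=
  ⟨insert e X.1,
    insert_subset (mem_Icc.2 (by omega)) (X.2.1.trans (Icc_subset_Icc_right (by omega))),
    by rw [card_insert_of_notMem (X.notMem_of_lt (by omega)), X.2.2]⟩

theorem kneserProj_kneserLift (hmn : m ≤ n) {e : ℕ} (he : e = n + 1 ∨ e = n + 2)
    (X : KneserVert n m) : kneserProj hmn (kneserLift e he X) = X :=
  Subtype.ext (kneserDown_insert X.2.1 he)

theorem KG_adj_kneserLift (hm : 0 < m) {X Y : KneserVert n m} (hXY : (KG n m).Adj X Y) :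
    (KG (n + 2) (m + 1)).Adj (kneserLift (n + 1) (.inl rfl) X)
      (kneserLift (n + 2) (.inr rfl) Y) := by
  rw [KG_adj_iff m.succ_pos]
  simp [kneserLift, disjoint_insert_left, disjoint_insert_right,
    X.notMem_of_lt (by omega : n < n + 2), Y.notMem_of_lt (by omega : n < n + 1),
    ((KG_adj_iff hm).1 hXY)]

theorem isSLSHom_kneserProj (hm : 0 < m) (hmn : m ≤ n) :
    IsSLSHom (KG (n + 2) (m + 1)) (KG n m) (kneserProj hmn) := by
  have hlift : ∀ X, ∃ A, kneserProj hmn A = X ∧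
      ∀ Y, (KG n m).Adj X Y → ∃ B, kneserProj hmn B = Y ∧ (KG (n + 2) (m + 1)).Adj A B :=
    fun X => ⟨_, kneserProj_kneserLift hmn _ X,
      fun Y hXY => ⟨_, kneserProj_kneserLift hmn _ Y, KG_adj_kneserLift hm hXY⟩⟩
  refine ⟨fun A B hAB => ?_, fun X => (hlift X).imp fun _ h => h.1, hlift⟩
  rw [KG_adj_iff hm]
  exact disjoint_kneserDown A.2.1 B.2.1 ((KG_adj_iff m.succ_pos).1 hAB)

end KneserGraph

/-- For positive integers `n, m` with `n > 2m`,
`B(KG(n,m)) ⊆ B(KG(n+2, m+1))`. -/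
theorem stmt_7 (n m : ℕ) (hm : 0 < m) (hnm : n > 2 * m) :
    BSet (KG n m) ⊆ BSet (KG (n + 2) (m + 1)) :=
  BSet_subset_of_isSLSHom (isSLSHom_kneserProj hm (by omega))
end

section
/- For every natural number k ≥ 3, the Kneser graph KG(2k+1, k) admits a colorful 4-coloring; that is, 4 ∈ B(KG(2k+1, k)). -/
/-!
Write `L = {1, …, k + 2}`, `upper j = {j} ∪ {k + 3, …, 2k + 1}` and `lower a b = L \ {a, b}`;
for `x ≠ j` in `L`, `lower j x` is a neighbour of `upper j` in `KG(2k + 1, k)`.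

Start from the proper 3-colouring by the least of `1, 2` in a set, with colour `2` for the sets
avoiding both (they pairwise meet, lying in a `(2k - 1)`-set). Give the new colour `3` to the
three sets `lower 2 3`, `lower 1 4`, `upper (k + 2)`, which share the point `k + 2`, and move
`lower 2 (k + 2) = {1, 3, …, k + 1}` to colour `2`: the only set avoiding `1, 2` that it misses is
`upper (k + 2)`, which no longer has colour `2`. Then `upper 1`, `upper 2`, `upper 3` and
`upper (k + 2)` are b-dominating vertices of colours `0`, `1`, `2`, `3`.
-/

open Finset

theorem KG_adj_of_disjoint {n m : ℕ} (hm : 0 < m) {X Y : KneserVert n m} (h : Disjoint X.1 Y.1) :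
    (KG n m).Adj X Y := by
  refine ⟨fun hXY => ?_, h⟩
  subst hXY
  have hcard := X.2.2
  rw [disjoint_self.1 h, bot_eq_empty, card_empty] at hcard
  omega

namespace KneserColoring

variable {k : ℕ}

def upper (k j : ℕ) : Finset ℕ := insert j (Icc (k + 3) (2 * k + 1))

def lower (k a b : ℕ) : Finset ℕ := ((Icc 1 (k + 2)).erase a).erase b

theorem mem_upper {j x : ℕ} : x ∈ upper k j ↔ x = j ∨ k + 3 ≤ x ∧ x ≤ 2 * k + 1 := by
  simp [upper]

theorem mem_lower {a b x : ℕ} : x ∈ lower k a b ↔ x ≠ b ∧ x ≠ a ∧ 1 ≤ x ∧ x ≤ k + 2 := by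
  simp [lower]

theorem lower_comm {a b : ℕ} : lower k a b = lower k b a :=
  erase_right_comm

theorem card_upper (hk : 1 ≤ k) {j : ℕ} (hj : j ≤ k + 2) : #(upper k j) = k := by
  rw [upper, card_insert_of_notMem (by simp; omega), Nat.card_Icc]
  omega

theorem upper_subset {j : ℕ} (hj : 1 ≤ j) (hj' : j ≤ 2 * k + 1) :
    upper k j ⊆ Icc 1 (2 * k + 1) := by
  intro x hx
  rw [mem_upper] at hx
  rw [mem_Icc]
  omega

theorem card_lower {a b : ℕ} (ha : 1 ≤ a ∧ a ≤ k + 2) (hb : 1 ≤ b ∧ b ≤ k + 2) (hab : a ≠ b) :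
    #(lower k a b) = k := by
  rw [lower, card_erase_of_mem (by simp; omega), card_erase_of_mem (by simp; omega), Nat.card_Icc]
  omega

theorem lower_subset (hk : 1 ≤ k) {a b : ℕ} : lower k a b ⊆ Icc 1 (2 * k + 1) := by
  intro x hx
  rw [mem_lower] at hx
  rw [mem_Icc]
  omega

theorem disjoint_upper_lower {j x : ℕ} : Disjoint (upper k j) (lower k j x) := by
  refine disjoint_left.2 fun y hy hy' => ?_
  rw [mem_upper] at hy
  rw [mem_lower] at hy'
  omega

theorem upper_ne_lower (hk : 2 ≤ k) {j a b : ℕ} : upper k j ≠ lower k a b :=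
  ne_of_mem_of_not_mem' (a := 2 * k + 1) (mem_upper.2 (by omega)) (by rw [mem_lower]; omega)

theorem lower_ne_lower {a b c d : ℕ} (h : c ∈ lower k a b ∨ d ∈ lower k a b) :
    lower k a b ≠ lower k c d := by
  intro hab
  rw [hab] at h
  simp only [mem_lower] at h
  omega

def color (k : ℕ) (A : Finset ℕ) : Fin 4 :=
  if A = lower k 2 3 ∨ A = lower k 1 4 ∨ A = upper k (k + 2) then 3
  else if A = lower k 2 (k + 2) then 2
  else if 1 ∈ A then 0
  else if 2 ∈ A then 1
  else 2

theorem color_eq_three_of {A : Finset ℕ}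
    (h : A = lower k 2 3 ∨ A = lower k 1 4 ∨ A = upper k (k + 2)) : color k A = 3 :=
  if_pos h

theorem color_eq_zero_of {A : Finset ℕ} (h1 : 1 ∈ A) (hW : A ≠ lower k 2 3)
    (hU : A ≠ lower k 2 (k + 2)) : color k A = 0 := by
  have h4 : A ≠ lower k 1 4 := ne_of_mem_of_not_mem' h1 (by rw [mem_lower]; omega)
  have hT : A ≠ upper k (k + 2) := ne_of_mem_of_not_mem' h1 (by rw [mem_upper]; omega)
  simp [color, h1, hW, hU, h4, hT]

theorem color_eq_one_of (hk : 1 ≤ k) {A : Finset ℕ} (h1 : 1 ∉ A) (h2 : 2 ∈ A)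
    (hW : A ≠ lower k 1 4) : color k A = 1 := by
  have h3 : A ≠ lower k 2 3 := ne_of_mem_of_not_mem' h2 (by rw [mem_lower]; omega)
  have hU : A ≠ lower k 2 (k + 2) := ne_of_mem_of_not_mem' h2 (by rw [mem_lower]; omega)
  have hT : A ≠ upper k (k + 2) := ne_of_mem_of_not_mem' h2 (by rw [mem_upper]; omega)
  simp [color, h1, h2, hW, h3, hU, hT]

theorem color_eq_two_of {A : Finset ℕ} (h1 : 1 ∉ A) (h2 : 2 ∉ A)
    (hT : A ≠ upper k (k + 2)) : color k A = 2 := by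
  have h3 : A ≠ lower k 2 3 := fun h => h1 (h ▸ mem_lower.2 (by omega))
  have h4 : A ≠ lower k 1 4 := fun h => h2 (h ▸ mem_lower.2 (by omega))
  have hU : A ≠ lower k 2 (k + 2) := fun h => h1 (h ▸ mem_lower.2 (by omega))
  simp [color, h1, h2, hT, h3, h4, hU]

theorem color_lower_two_top (hk : 2 ≤ k) : color k (lower k 2 (k + 2)) = 2 := by
  have h3 : lower k 2 (k + 2) ≠ lower k 2 3 := lower_ne_lower (by simp only [mem_lower]; omega)
  have h4 : lower k 2 (k + 2) ≠ lower k 1 4 :=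
    ne_of_mem_of_not_mem' (a := 1) (mem_lower.2 (by omega)) (by rw [mem_lower]; omega)
  have hT : lower k 2 (k + 2) ≠ upper k (k + 2) :=
    ne_of_mem_of_not_mem' (a := 1) (mem_lower.2 (by omega)) (by rw [mem_upper]; omega)
  simp [color, h3, h4, hT]

theorem one_mem_of_color_eq_zero {A : Finset ℕ} (h : color k A = 0) : 1 ∈ A := by
  unfold color at h
  split_ifs at h <;> first | assumption | simp at h

theorem two_mem_of_color_eq_one {A : Finset ℕ} (h : color k A = 1) : 2 ∈ A := by
  unfold color at h
  split_ifs at h <;> first | assumption | simp at h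

theorem top_mem_of_color_eq_three (hk : 3 ≤ k) {A : Finset ℕ} (h : color k A = 3) :
    k + 2 ∈ A := by
  unfold color at h
  split_ifs at h with hW
  · rcases hW with rfl | rfl | rfl
    · exact mem_lower.2 (by omega)
    · exact mem_lower.2 (by omega)
    · exact mem_upper.2 (by omega)
  all_goals simp at h

theorem color_eq_two_cases {A : Finset ℕ} (h : color k A = 2) :
    A = lower k 2 (k + 2) ∨ 1 ∉ A ∧ 2 ∉ A ∧ A ≠ upper k (k + 2) := by
  unfold color at h
  split_ifs at h <;> simp_all

theorem eq_upper_of_disjoint_lower (hk : 1 ≤ k) {B : Finset ℕ} (hB : B ⊆ Icc 1 (2 * k + 1))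
    (hBk : #B = k) (h2 : 2 ∉ B) (hd : Disjoint (lower k 2 (k + 2)) B) : B = upper k (k + 2) := by
  refine eq_of_subset_of_card_le (fun x hx => ?_) (by rw [hBk, card_upper hk le_rfl])
  have hxB := mem_Icc.1 (hB hx)
  have hxL : x ∉ lower k 2 (k + 2) := disjoint_right.1 hd hx
  have hx2 : x ≠ 2 := fun h => h2 (h ▸ hx)
  rw [mem_lower] at hxL
  rw [mem_upper]
  omega

theorem subset_Icc_three {A : Finset ℕ} (hA : A ⊆ Icc 1 (2 * k + 1)) (h1 : 1 ∉ A) (h2 : 2 ∉ A) :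
    A ⊆ Icc 3 (2 * k + 1) := by
  intro x hx
  have hxA := mem_Icc.1 (hA hx)
  have : x ≠ 1 := fun h => h1 (h ▸ hx)
  have : x ≠ 2 := fun h => h2 (h ▸ hx)
  rw [mem_Icc]
  omega

theorem inter_nonempty_of_color_eq_two (hk : 1 ≤ k) {A B : Finset ℕ}
    (hA : A ⊆ Icc 1 (2 * k + 1)) (hAk : #A = k) (hB : B ⊆ Icc 1 (2 * k + 1)) (hBk : #B = k)
    (hAc : color k A = 2) (hBc : color k B = 2) : (A ∩ B).Nonempty := by
  have lower_inter {C : Finset ℕ} (hC : C ⊆ Icc 1 (2 * k + 1)) (hCk : #C = k) (h2 : 2 ∉ C)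
      (hCT : C ≠ upper k (k + 2)) : (lower k 2 (k + 2) ∩ C).Nonempty := by
    rw [← not_disjoint_iff_nonempty_inter]
    exact fun hd => hCT (eq_upper_of_disjoint_lower hk hC hCk h2 hd)
  rcases color_eq_two_cases hAc with rfl | ⟨hA1, hA2, hAT⟩ <;>
    rcases color_eq_two_cases hBc with rfl | ⟨hB1, hB2, hBT⟩
  · exact ⟨1, by simp only [inter_self, mem_lower]; omega⟩
  · exact lower_inter hB hBk hB2 hBT
  · exact inter_comm A _ ▸ lower_inter hA hAk hA2 hAT
  · refine inter_nonempty_of_card_lt_card_add_card (subset_Icc_three hA hA1 hA2)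
      (subset_Icc_three hB hB1 hB2) ?_
    rw [Nat.card_Icc, hAk, hBk]
    omega

theorem inter_nonempty_of_color_eq (hk : 3 ≤ k) {A B : Finset ℕ}
    (hA : A ⊆ Icc 1 (2 * k + 1)) (hAk : #A = k) (hB : B ⊆ Icc 1 (2 * k + 1)) (hBk : #B = k)
    (h : color k A = color k B) : (A ∩ B).Nonempty := by
  generalize hc : color k B = c at h
  fin_cases c
  · exact ⟨1, mem_inter.2 ⟨one_mem_of_color_eq_zero h, one_mem_of_color_eq_zero hc⟩⟩
  · exact ⟨2, mem_inter.2 ⟨two_mem_of_color_eq_one h, two_mem_of_color_eq_one hc⟩⟩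
  · exact inter_nonempty_of_color_eq_two (by omega) hA hAk hB hBk h hc
  · exact ⟨k + 2, mem_inter.2 ⟨top_mem_of_color_eq_three hk h, top_mem_of_color_eq_three hk hc⟩⟩

theorem isProperColoring_color (hk : 3 ≤ k) :
    IsProperColoring (KG (2 * k + 1) k) fun X => color k X.1 := fun X Y hXY hc =>
  not_disjoint_iff_nonempty_inter.2
    (inter_nonempty_of_color_eq hk X.2.1 X.2.2 Y.2.1 Y.2.2 hc) hXY.2

theorem exists_isBDominating_upper {n : ℕ} {c : Finset ℕ → Fin n} (hk : 1 ≤ k) {j : ℕ}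
    (hj : 1 ≤ j ∧ j ≤ k + 2) {i : Fin n} (hi : c (upper k j) = i)
    (h : ∀ i', i' ≠ i → ∃ x, (1 ≤ x ∧ x ≤ k + 2 ∧ x ≠ j) ∧ c (lower k j x) = i') :
    ∃ X : KneserVert (2 * k + 1) k,
      c X.1 = i ∧ IsBDominating (KG (2 * k + 1) k) (fun Y => c Y.1) X := by
  refine ⟨⟨upper k j, upper_subset hj.1 (by omega), card_upper hk hj.2⟩, hi, fun i' => ?_⟩
  rcases eq_or_ne i' i with rfl | hne
  · exact .inl hi
  obtain ⟨x, ⟨hx1, hx2, hxj⟩, hx⟩ := h i' hne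
  exact .inr ⟨⟨lower k j x, lower_subset hk, card_lower hj ⟨hx1, hx2⟩ hxj.symm⟩,
    KG_adj_of_disjoint (by omega) disjoint_upper_lower, hx⟩

theorem exists_isBDominating_color_eq_zero (hk : 3 ≤ k) :
    ∃ X : KneserVert (2 * k + 1) k,
      color k X.1 = 0 ∧ IsBDominating (KG (2 * k + 1) k) (fun Y => color k Y.1) X := by
  refine exists_isBDominating_upper (j := 1) (by omega) (by omega)
    (color_eq_zero_of (mem_upper.2 (.inl rfl)) (upper_ne_lower (by omega))
      (upper_ne_lower (by omega))) fun i hi => ?_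
  fin_cases i
  · exact absurd rfl hi
  · exact ⟨k + 2, by omega, color_eq_one_of (by omega) (by rw [mem_lower]; omega)
      (mem_lower.2 (by omega)) (lower_ne_lower (by simp only [mem_lower]; omega))⟩
  · exact ⟨2, by omega, color_eq_two_of (by rw [mem_lower]; omega) (by rw [mem_lower]; omega)
      (upper_ne_lower (by omega)).symm⟩
  · exact ⟨4, by omega, color_eq_three_of (.inr (.inl rfl))⟩

theorem exists_isBDominating_color_eq_one (hk : 3 ≤ k) :
    ∃ X : KneserVert (2 * k + 1) k,
      color k X.1 = 1 ∧ IsBDominating (KG (2 * k + 1) k) (fun Y => color k Y.1) X := by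
  refine exists_isBDominating_upper (j := 2) (by omega) (by omega)
    (color_eq_one_of (by omega) (by rw [mem_upper]; omega) (mem_upper.2 (.inl rfl))
      (upper_ne_lower (by omega))) fun i hi => ?_
  fin_cases i
  · exact ⟨4, by omega, color_eq_zero_of (mem_lower.2 (by omega))
      (lower_ne_lower (by simp only [mem_lower]; omega))
      (lower_ne_lower (by simp only [mem_lower]; omega))⟩
  · exact absurd rfl hi
  · exact ⟨1, by omega, color_eq_two_of (by rw [mem_lower]; omega) (by rw [mem_lower]; omega)
      (upper_ne_lower (by omega)).symm⟩
  · exact ⟨3, by omega, color_eq_three_of (.inl rfl)⟩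

theorem exists_isBDominating_color_eq_two (hk : 3 ≤ k) :
    ∃ X : KneserVert (2 * k + 1) k,
      color k X.1 = 2 ∧ IsBDominating (KG (2 * k + 1) k) (fun Y => color k Y.1) X := by
  refine exists_isBDominating_upper (j := 3) (by omega) (by omega)
    (color_eq_two_of (by rw [mem_upper]; omega) (by rw [mem_upper]; omega)
      (ne_of_mem_of_not_mem' (mem_upper.2 (.inl rfl)) (by rw [mem_upper]; omega)))
    fun i hi => ?_
  fin_cases i
  · exact ⟨4, by omega, color_eq_zero_of (mem_lower.2 (by omega))
      (lower_ne_lower (by simp only [mem_lower]; omega))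
      (lower_ne_lower (by simp only [mem_lower]; omega))⟩
  · exact ⟨1, by omega, color_eq_one_of (by omega) (by rw [mem_lower]; omega)
      (mem_lower.2 (by omega)) (lower_ne_lower (by simp only [mem_lower]; omega))⟩
  · exact absurd rfl hi
  · exact ⟨2, by omega, color_eq_three_of (.inl lower_comm)⟩

theorem exists_isBDominating_color_eq_three (hk : 3 ≤ k) :
    ∃ X : KneserVert (2 * k + 1) k,
      color k X.1 = 3 ∧ IsBDominating (KG (2 * k + 1) k) (fun Y => color k Y.1) X := by
  refine exists_isBDominating_upper (j := k + 2) (by omega) (by omega)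
    (color_eq_three_of (.inr (.inr rfl))) fun i hi => ?_
  fin_cases i
  · exact ⟨k + 1, by omega, color_eq_zero_of (mem_lower.2 (by omega))
      (lower_ne_lower (by simp only [mem_lower]; omega))
      (lower_ne_lower (by simp only [mem_lower]; omega))⟩
  · exact ⟨1, by omega, color_eq_one_of (by omega) (by rw [mem_lower]; omega)
      (mem_lower.2 (by omega)) (lower_ne_lower (by simp only [mem_lower]; omega))⟩
  · exact ⟨2, by omega, lower_comm (k := k) ▸ color_lower_two_top (by omega)⟩
  · exact absurd rfl hi

theorem exists_isBDominating_color (hk : 3 ≤ k) (i : Fin 4) :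
    ∃ X : KneserVert (2 * k + 1) k,
      color k X.1 = i ∧ IsBDominating (KG (2 * k + 1) k) (fun Y => color k Y.1) X := by
  fin_cases i
  exacts [exists_isBDominating_color_eq_zero hk, exists_isBDominating_color_eq_one hk,
    exists_isBDominating_color_eq_two hk, exists_isBDominating_color_eq_three hk]

end KneserColoring

/-- For every `k ≥ 3`, the Kneser graph `KG (2k+1) k` admits a
colorful 4-coloring, i.e. `4 ∈ B(KG(2k+1, k))`. -/
theorem stmt_12 (k : ℕ) (hk : 3 ≤ k) :
    4 ∈ BSet (KG (2 * k + 1) k) :=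
  ⟨by norm_num, fun X => KneserColoring.color k X.1, KneserColoring.isProperColoring_color hk,
    KneserColoring.exists_isBDominating_color hk⟩
end
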